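/- arXiv:2601.15527 — 5 statements merged into one kernel-verified Lean document; each statement's English description precedes it below -/
import Mathlib

section
/- For an ordered set X = {x_1 < x_2 < ... < x_k} ⊆ [n], the number of permutations σ ∈ S_n whose descent top set is contained in X equals (k+1)^{x_1−1} · k^{x_2−x_1} · (k−1)^{x_3−x_2} · ... · 2^{x_k−x_{k−1}}. (When X = ∅ this count is 1.) -/
open Finset

/-- Positions of descents of a permutation of `Fin (n+1)` in one-line notation. -/
def descSet (n : ℕ) (σ : Equiv.Perm (Fin (n+1))) : Finset (Fin n) :=
  Finset.univ.filter (fun i : Fin n => σ i.succ < σ i.castSucc)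

/-- Number of descents. -/
def des (n : ℕ) (σ : Equiv.Perm (Fin (n+1))) : ℕ := (descSet n σ).card

/-- Descent top set, with values written 1-based (so `DT n σ ⊆ [2, n+1]`). -/
def DT (n : ℕ) (σ : Equiv.Perm (Fin (n+1))) : Finset ℕ :=
  (descSet n σ).image (fun i => (σ i.castSucc : ℕ) + 1)

/-- `β!̂ = (k+1)^{β₁} k^{β₂} ⋯ 2^{β_k}` for a tuple `β` of length `k`. -/
def hatFac (β : List ℕ) : ℕ :=
  (β.zipIdx.map (fun p => (β.length + 1 - p.2) ^ p.1)).prod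

/-- `α(X)!̂` where, for `X = {x₁ < … < x_k}`, `α(X) = (x₁ - 1, x₂ - x₁, …, x_k - x_{k-1})`. -/
def alphaHat (X : Finset ℕ) : ℕ :=
  hatFac (List.zipWith (fun a b => b - a) (1 :: X.sort (· ≤ ·)) (X.sort (· ≤ ·)))

/-!
Build a permutation by inserting its values from the largest down. The current value `m` is
smaller than everything already placed, so it goes either in front or directly after some
larger value `b`; then `b` becomes a descent top and no other descent top is created or destroyed
(`descentTops_append_cons_of_forall_lt`). Hence if `DT(σ) ⊆ X`, the value `v` has
`#{x ∈ X | v < x} + 1` possible positions, and the product of these numbers over `v ∈ [n+1]` is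
`α(X)!̂`: for `x_{j-1} ≤ v < x_j` (with `x_0 = 1`) there are `k - j + 2` of them.
-/

section DescentTops

variable {α : Type*} [LinearOrder α]

def descentTops : List α → Finset α
  | a :: b :: t => (if b < a then {a} else ∅) ∪ descentTops (b :: t)
  | _ => ∅

@[simp] lemma descentTops_nil : descentTops ([] : List α) = ∅ := rfl

@[simp] lemma descentTops_singleton (a : α) : descentTops [a] = ∅ := rfl

@[simp] lemma descentTops_cons_cons (a b : α) (t : List α) :
    descentTops (a :: b :: t) = (if b < a then {a} else ∅) ∪ descentTops (b :: t) := rfl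

lemma mem_descentTops {x : α} : ∀ {l : List α},
    x ∈ descentTops l ↔ ∃ (i : ℕ) (h : i + 1 < l.length), l[i + 1] < l[i] ∧ l[i] = x
  | [] | [_] => by simp
  | a :: b :: t => by
    rw [descentTops_cons_cons, mem_union, mem_descentTops]
    constructor
    · rintro (h | ⟨i, hi, h⟩)
      · split_ifs at h with hba
        · exact ⟨0, by simp, hba, (mem_singleton.mp h).symm⟩
        · simp at h
      · exact ⟨i + 1, by simpa using hi, h⟩
    · rintro ⟨_ | i, hi, h⟩
      · obtain ⟨hba, rfl⟩ := h
        exact Or.inl (by simp_all)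
      · exact Or.inr ⟨i, by simpa using hi, h⟩

lemma descentTops_append_cons_of_forall_lt {m : α} : ∀ {u w : List α},
    (∀ a ∈ u, m < a) → (∀ a ∈ w, m < a) →
    descentTops (u ++ m :: w) = descentTops (u ++ w) ∪ u.getLast?.toFinset
  | [], [], _, _ => by simp
  | [], c :: w, _, hw => by simp [(hw c (by simp)).not_gt]
  | [a], w, hu, hw => by
    cases w with
    | nil => simp [hu a (by simp)]
    | cons c t =>
      simp only [List.cons_append, List.nil_append, descentTops_cons_cons, if_pos (hu a (by simp)),
        if_neg (hw c (by simp)).not_gt, List.getLast?_singleton, Option.toFinset_some]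
      ext x
      by_cases hca : c < a <;> simp [hca]
  | a :: c :: u, w, hu, hw => by
    have ih := descentTops_append_cons_of_forall_lt (u := c :: u)
      (fun x hx => hu x (List.mem_cons_of_mem a hx)) hw
    simp only [List.cons_append, descentTops_cons_cons] at ih ⊢
    rw [ih, List.getLast?_cons_cons, union_assoc]

lemma descentTops_erase_subset_of_forall_lt {m : α} {l : List α} (hm : ∀ a ∈ l.erase m, m < a) :
    descentTops (l.erase m) ⊆ descentTops l := by
  by_cases hml : m ∈ l
  · obtain ⟨u, w, -, rfl, he⟩ := List.exists_erase_eq hml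
    rw [he] at hm ⊢
    rw [descentTops_append_cons_of_forall_lt (fun a ha => hm a (List.mem_append_left _ ha))
      (fun a ha => hm a (List.mem_append_right _ ha))]
    exact subset_union_left
  · rw [List.erase_of_not_mem hml]

end DescentTops

section Insertion

variable {α : Type*} [DecidableEq α]

lemma mem_and_erase_eq_iff {m : α} {l l' : List α} (hm : m ∉ l') :
    m ∈ l ∧ l.erase m = l' ↔ ∃ i ≤ l'.length, l = l'.take i ++ m :: l'.drop i := by
  constructor
  · rintro ⟨hml, rfl⟩
    obtain ⟨u, w, -, rfl, he⟩ := List.exists_erase_eq hml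
    exact ⟨u.length, by simp [he], by simp [he]⟩
  · rintro ⟨i, -, rfl⟩
    have hmi : m ∉ l'.take i := fun h => hm (List.mem_of_mem_take h)
    rw [List.erase_append_right _ hmi, List.erase_cons_head, List.take_append_drop]
    simp

lemma idxOf_take_append_cons_drop {m : α} {l : List α} (hm : m ∉ l) {i : ℕ} (hi : i ≤ l.length) :
    (l.take i ++ m :: l.drop i).idxOf m = i := by
  rw [List.idxOf_append_of_notMem (fun h => hm (List.mem_of_mem_take h))]
  simp [hi]

lemma card_filter_range_getElem?_mem (X : Finset α) :
    ∀ l : List α, #{j ∈ range l.length | ∀ b ∈ l[j]?, b ∈ X} = l.countP (· ∈ X)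
  | [] => rfl
  | a :: t => by
    have ih := card_filter_range_getElem?_mem X t
    rw [card_filter] at ih
    rw [card_filter, List.length_cons, sum_range_succ', List.countP_cons, ← ih]
    simp

lemma card_filter_range_getLast?_take_mem (X : Finset α) (l : List α) :
    #{i ∈ range (l.length + 1) | ∀ b ∈ (l.take i).getLast?, b ∈ X} = l.countP (· ∈ X) + 1 := by
  rw [card_filter, sum_range_succ', ← card_filter_range_getElem?_mem, card_filter]
  congr 1
  refine sum_congr rfl fun j hj => ?_
  simp [List.getLast?_take, List.getElem?_eq_getElem (mem_range.mp hj)]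

end Insertion

section Arrangements

variable {α : Type*}

def arrangements (S : Finset α) : Finset (List α) :=
  ⟨S.val.lists, Multiset.lists_nodup_finset S⟩

lemma mem_arrangements {S : Finset α} {l : List α} :
    l ∈ arrangements S ↔ (l : Multiset α) = S.val := by
  rw [arrangements, mem_mk, Multiset.mem_lists_iff, eq_comm]
  rfl

@[simp] lemma arrangements_empty : arrangements (∅ : Finset α) = {[]} := by
  ext l
  simp [mem_arrangements]

lemma card_arrangements (S : Finset α) : #(arrangements S) = (#S).factorial := by
  rw [arrangements, card_mk, ← S.coe_toList, Multiset.lists_coe, Multiset.coe_card,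
    List.length_permutations, length_toList]

variable [DecidableEq α]

lemma countP_mem_eq_card_inter {S : Finset α} {l : List α} (hl : l ∈ arrangements S)
    (X : Finset α) : l.countP (· ∈ X) = #(X ∩ S) := by
  rw [← Multiset.coe_countP, mem_arrangements.mp hl, Multiset.countP_eq_card_filter, inter_comm,
    ← filter_mem_eq_inter]
  rfl

lemma mem_arrangements_insert_and_erase_eq_iff {S : Finset α} {m : α} (hm : m ∉ S) {l l' : List α}
    (hl' : l' ∈ arrangements S) :
    l ∈ arrangements (insert m S) ∧ l.erase m = l' ↔ m ∈ l ∧ l.erase m = l' := by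
  refine and_congr_left fun he => ⟨fun hl => ?_, fun hml => ?_⟩
  · rw [← Multiset.mem_coe, mem_arrangements.mp hl]
    exact mem_insert_self m S
  · rw [mem_arrangements, insert_val_of_notMem hm, ← mem_arrangements.mp hl', ← he,
      ← Multiset.coe_erase, Multiset.cons_erase (Multiset.mem_coe.mpr hml)]

lemma erase_mem_arrangements_erase {S : Finset α} {l : List α} (hl : l ∈ arrangements S) (a : α) :
    l.erase a ∈ arrangements (S.erase a) := by
  rw [mem_arrangements, ← Multiset.coe_erase, mem_arrangements.mp hl, erase_val]

end Arrangements

section Counting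

variable {α : Type*} [LinearOrder α]

lemma card_filter_arrangements_insert_erase_eq {X S : Finset α} {m : α} (hm : ∀ x ∈ S, m < x)
    {l' : List α} (hl' : l' ∈ arrangements S) (hX : descentTops l' ⊆ X) :
    #{l ∈ arrangements (insert m S) | descentTops l ⊆ X ∧ l.erase m = l'} = #(X ∩ S) + 1 := by
  have hlt : ∀ a ∈ l', m < a := fun a ha =>
    hm a (by rwa [← Multiset.mem_coe, mem_arrangements.mp hl'] at ha)
  have hmS : m ∉ S := fun h => lt_irrefl m (hm m h)
  have hml' : m ∉ l' := fun h => lt_irrefl m (hlt m h)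
  set ins : ℕ → List α := fun i => l'.take i ++ m :: l'.drop i
  have hDT : ∀ i, descentTops (ins i) ⊆ X ↔ ∀ b ∈ (l'.take i).getLast?, b ∈ X := fun i => by
    rw [descentTops_append_cons_of_forall_lt (fun a ha => hlt a (List.mem_of_mem_take ha))
      (fun a ha => hlt a (List.mem_of_mem_drop ha)), List.take_append_drop, union_subset_iff]
    simp [hX, subset_iff]
  have hfiber : {l ∈ arrangements (insert m S) | descentTops l ⊆ X ∧ l.erase m = l'} =
      {i ∈ range (l'.length + 1) | ∀ b ∈ (l'.take i).getLast?, b ∈ X}.image ins := by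
    ext l
    rw [mem_filter, and_left_comm, mem_arrangements_insert_and_erase_eq_iff hmS hl',
      mem_and_erase_eq_iff hml', mem_image]
    constructor
    · rintro ⟨hl, i, hi, rfl⟩
      exact ⟨i, mem_filter.mpr ⟨mem_range.mpr (Nat.lt_succ_of_le hi), (hDT i).mp hl⟩, rfl⟩
    · rintro ⟨i, hi, rfl⟩
      rw [mem_filter, mem_range] at hi
      exact ⟨(hDT i).mpr hi.2, i, Nat.le_of_lt_succ hi.1, rfl⟩
  have hinj : Set.InjOn ins {i | i ≤ l'.length} := fun i hi j hj hij => by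
    rw [← idxOf_take_append_cons_drop hml' hi, ← idxOf_take_append_cons_drop hml' hj]
    exact congrArg (List.idxOf m) hij
  rw [hfiber, card_image_of_injOn (hinj.mono fun i hi => ?_), card_filter_range_getLast?_take_mem,
    countP_mem_eq_card_inter hl']
  exact Nat.le_of_lt_succ (mem_range.mp (mem_filter.mp hi).1)

theorem card_filter_arrangements_descentTops_subset (X S : Finset α) :
    #{l ∈ arrangements S | descentTops l ⊆ X} = ∏ v ∈ S, (#{x ∈ X ∩ S | v < x} + 1) := by
  induction S using Finset.induction_on_min with
  | empty => simp [filter_singleton]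
  | insert m S hm ih =>
    have hmS : m ∉ S := fun h => lt_irrefl m (hm m h)
    have herase : ∀ l ∈ {l ∈ arrangements (insert m S) | descentTops l ⊆ X},
        l.erase m ∈ {l ∈ arrangements S | descentTops l ⊆ X} := fun l hl => by
      obtain ⟨hl, hlX⟩ := mem_filter.mp hl
      have hl' := erase_insert hmS ▸ erase_mem_arrangements_erase hl m
      refine mem_filter.mpr
        ⟨hl', (descentTops_erase_subset_of_forall_lt fun a ha => hm a ?_).trans hlX⟩
      rwa [← Multiset.mem_coe, mem_arrangements.mp hl'] at ha
    have hfiber : ∀ l' ∈ {l ∈ arrangements S | descentTops l ⊆ X},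
        #{l ∈ {l ∈ arrangements (insert m S) | descentTops l ⊆ X} | l.erase m = l'} =
          #(X ∩ S) + 1 := fun l' hl' => by
      rw [filter_filter]
      exact card_filter_arrangements_insert_erase_eq hm (mem_filter.mp hl').1 (mem_filter.mp hl').2
    have hgt : ∀ v, m ≤ v → {x ∈ X ∩ insert m S | v < x} = {x ∈ X ∩ S | v < x} := fun v hv => by
      ext x
      simp only [mem_filter, mem_inter, mem_insert]
      constructor
      · rintro ⟨⟨hx, rfl | hxS⟩, hvx⟩
        exacts [absurd hv (not_le.mpr hvx), ⟨⟨hx, hxS⟩, hvx⟩]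
      · rintro ⟨⟨hx, hxS⟩, hvx⟩
        exact ⟨⟨hx, Or.inr hxS⟩, hvx⟩
    rw [card_eq_sum_card_fiberwise herase, sum_congr rfl hfiber, sum_const, smul_eq_mul, ih,
      prod_insert hmS, hgt m le_rfl, filter_true_of_mem fun x hx => hm x (mem_inter.mp hx).2,
      prod_congr rfl fun v (hv : v ∈ S) => congrArg (#· + 1) (hgt v (hm v hv).le), mul_comm]

end Counting

lemma hatFac_cons (d : ℕ) (β : List ℕ) : hatFac (d :: β) = (β.length + 2) ^ d * hatFac β := by
  simp only [hatFac, List.zipIdx_cons', List.map_cons, List.map_map, List.prod_cons,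
    List.length_cons]
  congr 2
  refine List.map_congr_left fun p _ => ?_
  simp only [Function.comp, Prod.map]
  congr 1
  omega

lemma prod_Ico_countP_lt_add_one_eq_hatFac {p N : ℕ} : ∀ {xs : List ℕ}, xs.Pairwise (· ≤ ·) →
    (∀ x ∈ xs, p ≤ x ∧ x ≤ N) →
    ∏ v ∈ Ico p N, (xs.countP (v < ·) + 1) = hatFac (List.zipWith (fun a b => b - a) (p :: xs) xs)
  | [], _, _ => by simp [hatFac]
  | x :: xs, hsorted, hbound => by
    obtain ⟨hle, hsorted⟩ := List.pairwise_cons.mp hsorted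
    obtain ⟨hpx, hxN⟩ := hbound x List.mem_cons_self
    have hbelow : ∀ v ∈ Ico p x, (x :: xs).countP (v < ·) + 1 = xs.length + 2 := fun v hv => by
      rw [List.countP_eq_length.mpr fun y hy => ?_]
      · simp
      · have hvx := (mem_Ico.mp hv).2
        rcases List.mem_cons.mp hy with rfl | hy
        exacts [decide_eq_true hvx, decide_eq_true (hvx.trans_le (hle y hy))]
    have habove : ∀ v ∈ Ico x N, (x :: xs).countP (v < ·) = xs.countP (v < ·) := fun v hv => by
      simp [(mem_Ico.mp hv).1]
    rw [← prod_Ico_consecutive _ hpx hxN, prod_congr rfl hbelow, prod_const, Nat.card_Ico,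
      prod_congr rfl fun v hv => congrArg (· + 1) (habove v hv),
      prod_Ico_countP_lt_add_one_eq_hatFac hsorted fun y hy =>
        ⟨hle y hy, (hbound y (List.mem_cons_of_mem x hy)).2⟩,
      List.zipWith_cons_cons, hatFac_cons, List.length_zipWith]
    simp

lemma prod_Icc_card_filter_lt_add_one_eq_alphaHat {X : Finset ℕ} {N : ℕ} (hX : X ⊆ Icc 1 N) :
    ∏ v ∈ Icc 1 N, (#{x ∈ X | v < x} + 1) = alphaHat X := by
  have hcount : ∀ v, #{x ∈ X | v < x} = (X.sort (· ≤ ·)).countP (v < ·) := fun v => by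
    rw [card_def, filter_val, ← Multiset.countP_eq_card_filter, ← sort_eq X (· ≤ ·),
      Multiset.coe_countP]
  simp_rw [hcount]
  rw [← Ico_add_one_right_eq_Icc, alphaHat]
  exact prod_Ico_countP_lt_add_one_eq_hatFac (pairwise_sort _ _) fun x hx =>
    (mem_Icc.mp (hX ((mem_sort _).mp hx))).imp_right Nat.le_succ_of_le

section OneLine

variable {n : ℕ}

def oneLine (σ : Equiv.Perm (Fin (n + 1))) : List ℕ :=
  List.ofFn fun i => (σ i : ℕ) + 1

lemma DT_eq_descentTops_oneLine (σ : Equiv.Perm (Fin (n + 1))) :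
    DT n σ = descentTops (oneLine σ) := by
  ext x
  simp only [DT, descSet, mem_image, mem_filter, mem_univ, true_and, mem_descentTops, oneLine,
    List.length_ofFn, List.getElem_ofFn, Fin.exists_iff, Fin.succ_mk, Fin.castSucc_mk,
    Nat.add_lt_add_iff_right, Fin.val_fin_lt]

lemma oneLine_injective : Function.Injective (oneLine (n := n)) := fun σ τ h => by
  ext i
  simpa using congrFun (List.ofFn_inj.mp h) i

lemma oneLine_mem_arrangements (σ : Equiv.Perm (Fin (n + 1))) :
    oneLine σ ∈ arrangements (Icc 1 (n + 1)) := by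
  rw [mem_arrangements, Multiset.Nodup.ext (Multiset.coe_nodup.mpr ?_) (Icc 1 (n + 1)).nodup]
  · intro a
    simp only [oneLine, Multiset.mem_coe, List.mem_ofFn, mem_val, mem_Icc]
    constructor
    · rintro ⟨i, rfl⟩
      exact ⟨Nat.le_add_left 1 _, Nat.succ_le_of_lt (σ i).isLt⟩
    · rintro ⟨ha1, han⟩
      exact ⟨σ.symm ⟨a - 1, by omega⟩, by rw [Equiv.apply_symm_apply, Fin.val_mk]; omega⟩
  · exact List.nodup_ofFn.mpr fun i j hij => σ.injective (Fin.ext (Nat.succ_injective hij))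

lemma image_oneLine_univ :
    (univ : Finset (Equiv.Perm (Fin (n + 1)))).image oneLine = arrangements (Icc 1 (n + 1)) :=
  eq_of_subset_of_card_le (image_subset_iff.mpr fun σ _ => oneLine_mem_arrangements σ) <| by
    rw [card_arrangements, Nat.card_Icc, card_image_of_injective _ oneLine_injective, card_univ,
      Fintype.card_perm, Fintype.card_fin, Nat.add_sub_cancel]

end OneLine

/-- The number of permutations whose descent top set is contained in `X` is `α(X)!̂`. -/
theorem card_DT_subset (n : ℕ) (X : Finset ℕ) (hX : X ⊆ Finset.Icc 1 (n+1)) :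
    (Finset.univ.filter (fun σ : Equiv.Perm (Fin (n+1)) => DT n σ ⊆ X)).card = alphaHat X := by
  calc #{σ : Equiv.Perm (Fin (n + 1)) | DT n σ ⊆ X}
      = #{l ∈ arrangements (Icc 1 (n + 1)) | descentTops l ⊆ X} := by
        rw [← image_oneLine_univ, filter_image, card_image_of_injective _ oneLine_injective]
        simp_rw [DT_eq_descentTops_oneLine]
    _ = ∏ v ∈ Icc 1 (n + 1), (#{x ∈ X ∩ Icc 1 (n + 1) | v < x} + 1) :=
        card_filter_arrangements_descentTops_subset X _
    _ = alphaHat X := by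
        rw [inter_eq_left.mpr hX, prod_Icc_card_filter_lt_add_one_eq_alphaHat hX]
end

section
/- Let τ: [n+2] → [n+2] be given by τ(i) = n+3−i. For every K ⊆ [2, n+1], the number of permutations σ ∈ S_{n+1} with DT(σ) = [2, n+1] ∖ K equals the number of permutations σ ∈ S_{n+1} with DT(σ) = τ(K) (note τ(K) ⊆ [2, n+1] since K ⊆ [2, n+1]). -/
open Finset

/-!
Append the sentinel value `n + 2` to the word of `σ` and read the result cyclically. Its cyclic
descent tops (values followed by a smaller one) are `DT(σ) ∪ {n + 2}`. Conjugating the cyclic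
successor map by the value reversal `v ↦ n + 3 - v` sends the set `T` of cyclic descent tops to
`τ([1, n + 2] ∖ T)`, and a suitable rotation of the reversed word again ends with the sentinel.
This gives an involution on `S_{n+1}` sending `DT(σ)` to `τ([2, n + 1] ∖ DT(σ))`.
Below, values are `0`-based: the sentinel is `Fin.last (n + 1)` and the reversal is `Fin.rev`.
-/

open Equiv

section CyclicWord

variable {m : ℕ}

/-- The successor map of the cyclic word `w 0, w 1, …, w m`. -/
def cyclicSucc (w : Perm (Fin (m + 1))) : Perm (Fin (m + 1)) := w * finRotate (m + 1) * w⁻¹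

def cyclicTops (w : Perm (Fin (m + 1))) : Finset (Fin (m + 1)) :=
  univ.filter fun v => cyclicSucc w v < v

lemma cyclicSucc_apply_apply (w : Perm (Fin (m + 1))) (x : Fin (m + 1)) :
    cyclicSucc w (w x) = w (finRotate (m + 1) x) := by
  simp [cyclicSucc]

lemma cyclicSucc_apply_ne_self (hm : 0 < m) (w : Perm (Fin (m + 1))) (v : Fin (m + 1)) :
    cyclicSucc w v ≠ v := by
  rw [← Perm.mem_support, cyclicSucc, Perm.support_conj, support_finRotate_of_le (by omega)]
  simp

/-- The reversed word `rev ∘ w`, rotated so that its value `last = rev 0` sits at position `last`. -/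
def revRotate (w : Perm (Fin (m + 1))) : Perm (Fin (m + 1)) :=
  Fin.revPerm * w * finCycle (w⁻¹ 0 - Fin.last m)

lemma revRotate_last (w : Perm (Fin (m + 1))) : revRotate w (Fin.last m) = Fin.last m := by
  simp [revRotate]

lemma revRotate_revRotate {w : Perm (Fin (m + 1))} (hw : w (Fin.last m) = Fin.last m) :
    revRotate (revRotate w) = w := by
  have hinv : (revRotate w)⁻¹ 0 = Fin.last m - (w⁻¹ 0 - Fin.last m) := by
    rw [Perm.inv_eq_iff_eq]
    simp [revRotate, hw]
  ext x
  rw [revRotate, Perm.mul_apply, Perm.mul_apply, finCycle_apply, hinv, revRotate]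
  simp only [Perm.mul_apply, finCycle_apply, Fin.revPerm_apply, Fin.rev_rev]
  congr 2
  abel

lemma cyclicSucc_revRotate (w : Perm (Fin (m + 1))) :
    cyclicSucc (revRotate w) = Fin.revPerm * cyclicSucc w * Fin.revPerm := by
  have hcomm : ∀ c, Commute (finCycle c) (finRotate (m + 1)) := fun c =>
    Perm.ext fun x => by simp [add_right_comm]
  have hrev : (Fin.revPerm : Perm (Fin (m + 1)))⁻¹ = Fin.revPerm := Fin.revPerm_symm
  simp only [cyclicSucc, revRotate, mul_inv_rev, hrev, mul_assoc, (hcomm _).eq,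
    mul_inv_cancel_left]

lemma cyclicTops_revRotate (hm : 0 < m) (w : Perm (Fin (m + 1))) :
    cyclicTops (revRotate w) = (cyclicTops w)ᶜ.map Fin.revPerm.toEmbedding := by
  ext v
  rw [mem_map_equiv, Fin.revPerm_symm, mem_compl]
  simp only [cyclicTops, mem_filter, mem_univ, true_and, cyclicSucc_revRotate, Perm.mul_apply,
    Fin.revPerm_apply, Fin.rev_lt_iff, not_lt]
  exact ⟨le_of_lt, fun h => lt_of_le_of_ne h (cyclicSucc_apply_ne_self hm w _).symm⟩

lemma image_map_revPerm_compl {N : ℕ} (S : Finset (Fin N)) :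
    (Sᶜ.map Fin.revPerm.toEmbedding).image (fun v : Fin N => (v : ℕ) + 1) =
      (Icc 1 N \ S.image (fun v : Fin N => (v : ℕ) + 1)).image (fun k => N + 1 - k) := by
  ext k
  simp only [mem_image, mem_map_equiv, Fin.revPerm_symm, mem_compl, mem_sdiff, mem_Icc,
    Fin.revPerm_apply, not_exists, not_and]
  constructor
  · rintro ⟨v, hv, rfl⟩
    have hrev : (v.rev : ℕ) + v + 1 = N := by rw [Fin.val_rev]; have := v.isLt; omega
    refine ⟨(v.rev : ℕ) + 1, ⟨⟨by omega, by omega⟩, fun u hu huv => hv ?_⟩, by omega⟩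
    rwa [show u = v.rev from Fin.ext (by omega)] at hu
  · rintro ⟨j, ⟨⟨hj1, hjN⟩, hj⟩, rfl⟩
    refine ⟨(⟨j - 1, by omega⟩ : Fin N).rev, fun hu => hj _ (by simpa using hu) (by simp; omega), ?_⟩
    simp only [Fin.val_rev]
    omega

def fixLastEquiv : Perm (Fin m) ≃ {w : Perm (Fin (m + 1)) // w (Fin.last m) = Fin.last m} :=
  ((permCongr (finSuccAboveEquiv (Fin.last m))).trans (Perm.subtypeEquivSubtypePerm _)).trans
    (subtypeEquivRight fun _ => ⟨fun h => h _ (not_not.2 rfl), fun h _ ha => not_not.1 ha ▸ h⟩)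

lemma fixLastEquiv_castSucc (σ : Perm (Fin m)) (i : Fin m) :
    (fixLastEquiv σ).1 i.castSucc = (σ i).castSucc := by
  simp only [fixLastEquiv, trans_apply, subtypeEquivRight_apply_coe,
    Perm.subtypeEquivSubtypePerm_apply_coe]
  rw [Perm.ofSubtype_apply_of_mem (p := (· ≠ Fin.last m)) _ (Fin.castSucc_ne_last i)]
  simp [permCongr_apply, finSuccAboveEquiv_symm_apply_last, finSuccAboveEquiv_apply]

end CyclicWord

section DescentTops

variable {n : ℕ}

lemma image_cyclicTops_fixLastEquiv (σ : Perm (Fin (n + 1))) :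
    (cyclicTops (fixLastEquiv σ).1).image (fun v : Fin (n + 2) => (v : ℕ) + 1) =
      insert (n + 2) (DT n σ) := by
  set w := (fixLastEquiv σ).1
  have hlast : w (Fin.last _) = Fin.last _ := (fixLastEquiv σ).2
  have hcs : ∀ i, w i.castSucc = (σ i).castSucc := fixLastEquiv_castSucc σ
  ext k
  simp only [cyclicTops, mem_image, mem_filter, mem_univ, true_and, mem_insert, DT, descSet]
  constructor
  · rintro ⟨v, hv, rfl⟩
    obtain ⟨x, rfl⟩ := w.surjective v
    rw [cyclicSucc_apply_apply] at hv
    induction x using Fin.lastCases with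
    | last => simp [hlast]
    | cast j =>
      induction j using Fin.lastCases with
      | last =>
        rw [finRotate_apply, Fin.coeSucc_eq_succ, Fin.succ_last, hlast, hcs] at hv
        exact ((Fin.castSucc_lt_last _).asymm hv).elim
      | cast i =>
        rw [finRotate_apply, Fin.coeSucc_eq_succ, Fin.succ_castSucc, hcs, hcs,
          Fin.castSucc_lt_castSucc_iff] at hv
        exact Or.inr ⟨i, hv, by simp [hcs]⟩
  · rintro (rfl | ⟨i, hi, rfl⟩)
    · refine ⟨Fin.last _, ?_, by simp⟩
      rw [← hlast, cyclicSucc_apply_apply, hlast, finRotate_last, ← Fin.castSucc_zero, hcs]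
      exact Fin.castSucc_lt_last _
    · refine ⟨w i.castSucc.castSucc, ?_, by simp [hcs]⟩
      rw [cyclicSucc_apply_apply, finRotate_apply, Fin.coeSucc_eq_succ, Fin.succ_castSucc, hcs, hcs]
      exact Fin.castSucc_lt_castSucc_iff.2 hi

lemma DT_subset_Icc (σ : Perm (Fin (n + 1))) : DT n σ ⊆ Icc 2 (n + 1) := by
  intro k hk
  simp only [DT, descSet, mem_image, mem_filter, mem_univ, true_and] at hk
  obtain ⟨i, hi, rfl⟩ := hk
  have := (σ i.castSucc).isLt
  rw [Fin.lt_def] at hi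
  simp only [mem_Icc]
  omega

def dualPerm (σ : Perm (Fin (n + 1))) : Perm (Fin (n + 1)) :=
  fixLastEquiv.symm ⟨revRotate (fixLastEquiv σ).1, revRotate_last _⟩

lemma fixLastEquiv_dualPerm (σ : Perm (Fin (n + 1))) :
    (fixLastEquiv (dualPerm σ)).1 = revRotate (fixLastEquiv σ).1 := by
  simp [dualPerm]

lemma dualPerm_dualPerm (σ : Perm (Fin (n + 1))) : dualPerm (dualPerm σ) = σ := by
  apply fixLastEquiv.injective
  apply Subtype.ext
  rw [fixLastEquiv_dualPerm, fixLastEquiv_dualPerm, revRotate_revRotate (fixLastEquiv σ).2]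

lemma DT_dualPerm (σ : Perm (Fin (n + 1))) :
    DT n (dualPerm σ) = (Icc 2 (n + 1) \ DT n σ).image (fun k => n + 3 - k) := by
  have h := image_cyclicTops_fixLastEquiv (dualPerm σ)
  rw [fixLastEquiv_dualPerm, cyclicTops_revRotate (Nat.succ_pos n), image_map_revPerm_compl,
    image_cyclicTops_fixLastEquiv] at h
  ext k
  have hk := congrArg (k ∈ ·) h
  have hkRange := @DT_subset_Icc n (dualPerm σ) k
  simp only [mem_insert, mem_image, mem_sdiff, mem_Icc, eq_iff_iff] at hk hkRange ⊢
  constructor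
  · intro hkD
    obtain ⟨a, ⟨⟨ha1, ha2⟩, ha⟩, rfl⟩ := hk.2 (Or.inr hkD)
    have := hkRange hkD
    exact ⟨a, ⟨⟨by omega, by omega⟩, fun h => ha (Or.inr h)⟩, by omega⟩
  · rintro ⟨a, ⟨⟨ha2, ha1⟩, ha⟩, rfl⟩
    refine (hk.1 ⟨a, ⟨⟨by omega, by omega⟩, ?_⟩, by omega⟩).resolve_left (by omega)
    rintro (h | h)
    exacts [by omega, ha h]

lemma image_Icc_sdiff_image_reflect {K : Finset ℕ} (hK : K ⊆ Icc 2 (n + 1)) :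
    (Icc 2 (n + 1) \ K.image (fun k => n + 3 - k)).image (fun k => n + 3 - k) =
      Icc 2 (n + 1) \ K := by
  ext m
  simp only [mem_image, mem_sdiff, mem_Icc, not_exists, not_and]
  constructor
  · rintro ⟨j, ⟨⟨hj2, hj1⟩, hj⟩, rfl⟩
    exact ⟨⟨by omega, by omega⟩, fun hm => hj _ hm (by omega)⟩
  · rintro ⟨⟨hm2, hm1⟩, hm⟩
    refine ⟨n + 3 - m, ⟨⟨by omega, by omega⟩, fun k hk hkm => hm ?_⟩, by omega⟩
    have := mem_Icc.1 (hK hk)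
    rwa [show k = m by omega] at hk

end DescentTops

/-- With `τ(i) = n+3-i`, the number of permutations with descent top set `[2,n+1] ∖ K`
equals the number of permutations with descent top set `τ(K)`. -/
theorem card_DT_compl_eq_card_DT_tau (n : ℕ) (K : Finset ℕ) (hK : K ⊆ Finset.Icc 2 (n+1)) :
    (Finset.univ.filter
        (fun σ : Equiv.Perm (Fin (n+1)) => DT n σ = Finset.Icc 2 (n+1) \ K)).card =
      (Finset.univ.filter
        (fun σ : Equiv.Perm (Fin (n+1)) => DT n σ = K.image (fun k => n + 3 - k))).card := by
  refine card_nbij' dualPerm dualPerm (fun σ hσ => ?_) (fun σ hσ => ?_)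
    (fun σ _ => dualPerm_dualPerm σ) (fun σ _ => dualPerm_dualPerm σ)
  · simp only [coe_filter, mem_univ, true_and, Set.mem_ofPred_eq] at hσ ⊢
    rw [DT_dualPerm, hσ, sdiff_sdiff_right_self, inf_eq_inter, inter_eq_right.2 hK]
  · simp only [coe_filter, mem_univ, true_and, Set.mem_ofPred_eq] at hσ ⊢
    rw [DT_dualPerm, hσ, image_Icc_sdiff_image_reflect hK]
end

section
/- Let J = {j_1 < ... < j_k} ⊆ [2, n+1], and write τ_s(i) = s+3−i. Then α(τ_{n+1}(J))!̂ = (|J|+1) · α(τ_n(J))!̂. -/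
open Finset

/-!
Since every `j ∈ J` is at most `n + 1`, `τ_{n+1}(J)` is `τ_n(J)` shifted up by one and `τ_n(J)`
avoids `0`. Shifting a set of positive integers by one keeps all gaps `x_{i+1} - x_i` and raises
only the first entry `x₁ - 1` of `α` by one; that entry is the exponent of `|J| + 1` in `α!̂`.
-/

def gaps (l : List ℕ) : List ℕ :=
  List.zipWith (fun a b => b - a) (1 :: l) l

lemma hatFac_cons_succ (a : ℕ) (β : List ℕ) :
    hatFac ((a + 1) :: β) = (β.length + 2) * hatFac (a :: β) := by
  simp only [hatFac, List.zipIdx_cons, List.map_cons, List.prod_cons, List.length_cons,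
    Nat.sub_zero, pow_succ]
  ring

lemma zipWith_sub_map_add_right (c : ℕ) (l l' : List ℕ) :
    List.zipWith (fun a b => b - a) (l.map (· + c)) (l'.map (· + c)) =
      List.zipWith (fun a b => b - a) l l' := by
  simp [List.zipWith_map, Nat.add_sub_add_right]

lemma hatFac_gaps_map_succ (l : List ℕ) (hl : 0 ∉ l.head?) :
    hatFac (gaps (l.map (· + 1))) = (l.length + 1) * hatFac (gaps l) := by
  rcases l with _ | ⟨x, t⟩
  · rfl
  · obtain ⟨y, rfl⟩ : ∃ y, x = y + 1 := Nat.exists_eq_succ_of_ne_zero (by simpa using hl)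
    have hdiff := zipWith_sub_map_add_right 1 ((y + 1) :: t) t
    simp only [List.map_cons] at hdiff
    simp only [gaps, List.map_cons, List.zipWith_cons_cons, hdiff, Nat.add_sub_cancel,
      hatFac_cons_succ, List.length_zipWith, List.length_cons]
    congr 1
    omega

lemma Finset.sort_image_add_right (c : ℕ) (X : Finset ℕ) :
    (X.image (· + c)).sort (· ≤ ·) = (X.sort (· ≤ ·)).map (· + c) := by
  have := StrictMonoOn.map_finsetSort (f := addRightEmbedding c) (s := X)
    fun _ _ _ _ h => Nat.add_lt_add_right h c
  rw [Finset.map_eq_image] at this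
  exact this.symm

lemma alphaHat_image_add_one (X : Finset ℕ) (hX : 0 ∉ X) :
    alphaHat (X.image (· + 1)) = (X.card + 1) * alphaHat X := by
  have hhead : 0 ∉ (X.sort (· ≤ ·)).head? := fun h =>
    hX ((mem_sort _).1 (List.mem_of_mem_head? h))
  rw [alphaHat, alphaHat, sort_image_add_right, ← length_sort (· ≤ ·)]
  exact hatFac_gaps_map_succ _ hhead

/-- With `τ_s(i) = s+3-i`: `α(τ_{n+1}(J))!̂ = (|J|+1) ⋅ α(τ_n(J))!̂`. -/
theorem alphaHat_tau_succ (n : ℕ) (J : Finset ℕ) (hJ : J ⊆ Finset.Icc 2 (n+1)) :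
    alphaHat (J.image (fun j => n + 4 - j)) =
      (J.card + 1) * alphaHat (J.image (fun j => n + 3 - j)) := by
  have hbound : ∀ j ∈ J, j ≤ n + 1 := fun j hj => (mem_Icc.1 (hJ hj)).2
  have himage : J.image (fun j => n + 4 - j) = (J.image (fun j => n + 3 - j)).image (· + 1) := by
    rw [image_image]
    exact image_congr fun j hj => by have := hbound j hj; simp only [Function.comp_apply]; omega
  have hinj : Set.InjOn (fun j => n + 3 - j) J := fun a ha b hb h => by
    have := hbound a ha; have := hbound b hb; simp only at h; omega
  have hzero : 0 ∉ J.image (fun j => n + 3 - j) := by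
    simp only [mem_image, not_exists, not_and]
    intro j hj
    have := hbound j hj
    omega
  rw [himage, alphaHat_image_add_one _ hzero, card_image_of_injOn hinj]
end

section
/- For K ⊆ [2, n+1], the number of permutations in S_{n+2} with descent top set exactly [2, n+2] ∖ (K ∪ {n+2}) equals the number of permutations in S_{n+1} with descent top set exactly [2, n+1] ∖ K. -/
open Finset

/-!
If `μ ∈ S_{n+2}` does not fix `n+2`, the value `n+2` sits at some position before the last one
and is followed by a smaller value, so `n+2 ∈ DT(μ)`. Hence the permutations whose descent top
set avoids `n+2` are exactly the extensions of permutations of `S_{n+1}` by the fixed point `n+2`,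
and this extension does not change the descent top set.
-/

open Equiv

def extendLast {n : ℕ} (σ : Perm (Fin (n+1))) : Perm (Fin (n+2)) :=
  finSuccEquivLast.symm.permCongr σ.optionCongr

@[simp] lemma extendLast_castSucc {n : ℕ} (σ : Perm (Fin (n+1))) (i : Fin (n+1)) :
    extendLast σ i.castSucc = (σ i).castSucc := by
  simp [extendLast, permCongr_apply, finSuccEquivLast_castSucc, finSuccEquivLast_symm_some]

@[simp] lemma extendLast_last {n : ℕ} (σ : Perm (Fin (n+1))) :
    extendLast σ (Fin.last (n+1)) = Fin.last (n+1) := by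
  simp [extendLast, permCongr_apply, finSuccEquivLast_last]

lemma extendLast_injective {n : ℕ} : Function.Injective (extendLast (n := n)) :=
  fun _ _ h => optionCongr_injective ((permCongr _).injective h)

lemma exists_extendLast_eq {n : ℕ} (μ : Perm (Fin (n+2)))
    (hμ : μ (Fin.last (n+1)) = Fin.last (n+1)) :
    ∃ σ, extendLast σ = μ := by
  set ν := finSuccEquivLast.permCongr μ
  have hν : ν none = none := by simp [ν, permCongr_apply, hμ, finSuccEquivLast_last]
  refine ⟨removeNone ν, ?_⟩
  ext x
  simp [extendLast, map_equiv_removeNone, hν, ν, permCongr_apply]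

lemma descSet_extendLast {n : ℕ} (σ : Perm (Fin (n+1))) :
    descSet (n+1) (extendLast σ) = (descSet n σ).map Fin.castSuccEmb := by
  ext i
  induction i using Fin.lastCases with
  | last => simp [descSet, Fin.le_last]
  | cast j => simp [descSet, Fin.succ_castSucc, -Fin.castSucc_succ]

lemma DT_extendLast {n : ℕ} (σ : Perm (Fin (n+1))) : DT (n+1) (extendLast σ) = DT n σ := by
  simp [DT, descSet_extendLast, map_eq_image, image_image, Function.comp_def]

lemma add_two_mem_DT_of_apply_last_ne {n : ℕ} {μ : Perm (Fin (n+2))}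
    (h : μ (Fin.last (n+1)) ≠ Fin.last (n+1)) : n + 2 ∈ DT (n+1) μ := by
  have hpos : μ.symm (Fin.last (n+1)) ≠ Fin.last (n+1) := fun he =>
    h ((congrArg μ he).symm.trans (μ.apply_symm_apply _))
  obtain ⟨j, hj⟩ := Fin.exists_castSucc_eq.mpr hpos
  have htop : μ j.castSucc = Fin.last (n+1) := by simp [hj]
  have hdesc : μ j.succ < μ j.castSucc := by
    rw [htop, Fin.lt_last_iff_ne_last, ← htop, μ.injective.ne_iff]
    exact Fin.castSucc_lt_succ.ne'
  exact mem_image.mpr ⟨j, by simpa [descSet] using hdesc, by simp [htop]⟩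

lemma card_filter_DT_eq_of_add_two_notMem {n : ℕ} {T : Finset ℕ} (hT : n + 2 ∉ T) :
    #{μ : Perm (Fin (n+2)) | DT (n+1) μ = T} = #{σ : Perm (Fin (n+1)) | DT n σ = T} := by
  refine (card_bij (fun σ _ => extendLast σ) ?_ (fun σ _ τ _ h => extendLast_injective h) ?_).symm
  · intro σ hσ
    simpa [DT_extendLast] using hσ
  · intro μ hμ
    rw [mem_filter] at hμ
    have hfix : μ (Fin.last (n+1)) = Fin.last (n+1) := by
      by_contra hne
      exact hT (hμ.2 ▸ add_two_mem_DT_of_apply_last_ne hne)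
    obtain ⟨σ, rfl⟩ := exists_extendLast_eq μ hfix
    exact ⟨σ, by simpa [DT_extendLast] using hμ, rfl⟩

theorem card_DT_max_eq_general (n : ℕ) (K : Finset ℕ) :
    (Finset.univ.filter (fun μ : Equiv.Perm (Fin (n+2)) =>
        DT (n+1) μ = Finset.Icc 2 (n+2) \ (K ∪ {n+2}))).card =
      (Finset.univ.filter (fun σ : Equiv.Perm (Fin (n+1)) =>
        DT n σ = Finset.Icc 2 (n+1) \ K)).card := by
  have htarget : Icc 2 (n+2) \ (K ∪ {n+2}) = Icc 2 (n+1) \ K := by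
    ext x
    simp only [mem_sdiff, mem_Icc, mem_union, mem_singleton]
    grind
  rw [htarget]
  exact card_filter_DT_eq_of_add_two_notMem (by simp)

/-- The number of permutations in `S_{n+2}` with descent top set exactly
`[2,n+2] ∖ (K ∪ {n+2})` equals the number in `S_{n+1}` with descent top set exactly
`[2,n+1] ∖ K`. -/
theorem card_DT_max_eq (n : ℕ) (K : Finset ℕ) (hK : K ⊆ Finset.Icc 2 (n+1)) :
    (Finset.univ.filter (fun μ : Equiv.Perm (Fin (n+2)) =>
        DT (n+1) μ = Finset.Icc 2 (n+2) \ (K ∪ {n+2}))).card =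
      (Finset.univ.filter (fun σ : Equiv.Perm (Fin (n+1)) =>
        DT n σ = Finset.Icc 2 (n+1) \ K)).card :=
  card_DT_max_eq_general n K
end

section
/- The multivariate Eulerian polynomial A_n is complete: for every subset K ⊆ [2, n+1] there exists a permutation σ ∈ S_{n+1} with DT(σ) = K; hence every multiaffine monomial in the variables x_2, ..., x_{n+1} appears in A_n with a nonzero (positive) coefficient. -/
open Finset

/-- The multivariate Eulerian polynomial `Aₙ = ∑_σ ∏_{i ∈ DT(σ)} x_i`. -/
noncomputable def eulerMv (n : ℕ) : MvPolynomial ℕ ℤ :=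
  ∑ σ : Equiv.Perm (Fin (n+1)), ∏ i ∈ DT n σ, MvPolynomial.X i

/-- The exponent (as a `Finsupp`) of the multiaffine monomial `∏_{i ∈ K} x_i`. -/
noncomputable def expOf (K : Finset ℕ) : ℕ →₀ ℕ := ∑ i ∈ K, Finsupp.single i 1

/-- The one-line word of `σ` followed by the new largest value. -/
def appendMax (n : ℕ) (σ : Equiv.Perm (Fin (n+1))) : Equiv.Perm (Fin (n+2)) :=
  finSuccEquivLast.trans (σ.optionCongr.trans finSuccEquivLast.symm)

/-- The new largest value followed by the one-line word of `σ`. -/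
def prependMax (n : ℕ) (σ : Equiv.Perm (Fin (n+1))) : Equiv.Perm (Fin (n+2)) :=
  (finSuccEquiv (n+1)).trans (σ.optionCongr.trans finSuccEquivLast.symm)

section Extensions

variable (n : ℕ) (σ : Equiv.Perm (Fin (n+1)))

@[simp]
lemma appendMax_castSucc (i : Fin (n+1)) : appendMax n σ i.castSucc = (σ i).castSucc := by
  simp [appendMax]

@[simp]
lemma appendMax_last : appendMax n σ (Fin.last (n+1)) = Fin.last (n+1) := by
  simp [appendMax]

@[simp]
lemma prependMax_zero : prependMax n σ 0 = Fin.last (n+1) := by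
  simp [prependMax]

@[simp]
lemma prependMax_succ (i : Fin (n+1)) : prependMax n σ i.succ = (σ i).castSucc := by
  simp [prependMax]

lemma mem_DT {m : ℕ} :
    m ∈ DT n σ ↔ ∃ i : Fin n, σ i.succ < σ i.castSucc ∧ (σ i.castSucc : ℕ) + 1 = m := by
  simp [DT, descSet]

lemma DT_appendMax : DT (n+1) (appendMax n σ) = DT n σ := by
  ext m
  simp only [mem_DT, Fin.exists_fin_succ', Fin.succ_castSucc, Fin.succ_last, appendMax_castSucc,
    appendMax_last, Fin.castSucc_lt_castSucc_iff, Fin.val_castSucc, or_iff_left_iff_imp]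
  exact fun ⟨h, _⟩ => absurd h (lt_asymm (Fin.castSucc_lt_last _))

lemma DT_prependMax : DT (n+1) (prependMax n σ) = insert (n+2) (DT n σ) := by
  ext m
  simp only [mem_DT, mem_insert, Fin.exists_fin_succ, ← Fin.succ_castSucc, prependMax_succ,
    Fin.castSucc_zero, prependMax_zero, Fin.castSucc_lt_last, true_and, Fin.val_last,
    Fin.castSucc_lt_castSucc_iff, Fin.val_castSucc]
  rw [eq_comm]

end Extensions

lemma exists_DT_eq (n : ℕ) (K : Finset ℕ) (hK : K ⊆ Icc 2 (n+1)) :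
    ∃ σ : Equiv.Perm (Fin (n+1)), DT n σ = K := by
  induction n generalizing K with
  | zero =>
    refine ⟨1, ?_⟩
    rw [Icc_eq_empty (by omega), subset_empty] at hK
    simp [hK, DT, descSet]
  | succ n ih =>
    have hErase : K.erase (n+2) ⊆ Icc 2 (n+1) := fun m hm => by
      have := hK (mem_of_mem_erase hm)
      simp only [mem_Icc] at this ⊢
      have := ne_of_mem_erase hm
      omega
    obtain ⟨σ, hσ⟩ := ih _ hErase
    by_cases hTop : n + 2 ∈ K
    · exact ⟨prependMax n σ, by rw [DT_prependMax, hσ, insert_erase hTop]⟩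
    · exact ⟨appendMax n σ, by rw [DT_appendMax, hσ, erase_eq_of_notMem hTop]⟩

lemma expOf_apply (K : Finset ℕ) (j : ℕ) : expOf K j = if j ∈ K then 1 else 0 := by
  simp [expOf, Finsupp.finsetSum_apply, Finsupp.single_apply]

lemma expOf_injective : Function.Injective expOf := fun K L h => by
  ext j
  have := DFunLike.congr_fun h j
  simp only [expOf_apply] at this
  split_ifs at this <;> simp_all

lemma prod_X_eq_monomial_expOf {R : Type*} [CommSemiring R] (K : Finset ℕ) :
    ∏ i ∈ K, (MvPolynomial.X i : MvPolynomial ℕ R) = MvPolynomial.monomial (expOf K) 1 := by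
  simp [expOf, MvPolynomial.monomial_sum_one, MvPolynomial.X]

lemma coeff_expOf_eulerMv (n : ℕ) (K : Finset ℕ) :
    (eulerMv n).coeff (expOf K) = #{σ : Equiv.Perm (Fin (n+1)) | DT n σ = K} := by
  simp only [eulerMv, MvPolynomial.coeff_sum, prod_X_eq_monomial_expOf,
    MvPolynomial.coeff_monomial, expOf_injective.eq_iff, sum_boole]

/-- The multivariate Eulerian polynomial is complete: every subset of `[2,n+1]` is realized
as a descent top set, hence every multiaffine monomial appears with positive coefficient. -/
theorem eulerMv_complete (n : ℕ) :
    (∀ K : Finset ℕ, K ⊆ Finset.Icc 2 (n+1) →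
        ∃ σ : Equiv.Perm (Fin (n+1)), DT n σ = K) ∧
    ∀ K : Finset ℕ, K ⊆ Finset.Icc 2 (n+1) → 0 < (eulerMv n).coeff (expOf K) := by
  refine ⟨exists_DT_eq n, fun K hK => ?_⟩
  obtain ⟨σ, hσ⟩ := exists_DT_eq n K hK
  rw [coeff_expOf_eulerMv]
  exact_mod_cast card_pos.mpr ⟨σ, mem_filter.mpr ⟨mem_univ σ, hσ⟩⟩
end
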